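/- For m = 5k with k ≥ 1, in H = K_{m,m} \ E(C_{2m}) with parts {x_1,...,x_m}, {y_1,...,y_m} and C_{2m} = x_1 y_1 x_2 y_2 ... x_m y_m x_1, the set W = {y_{5j+1}, y_{5j+2}, x_{5j+4}, x_{5j+5} : 0 ≤ j ≤ k-1} is a resolving set of H of cardinality 4k. -/

import Mathlib

/-- `W` resolves `G`: every vertex is determined by its distance vector to `W`. -/
def Resolves {V : Type*} (G : SimpleGraph V) (W : Set V) : Prop :=
  ∀ u v : V, (∀ w ∈ W, G.dist u w = G.dist v w) → u = v

/-- Metric dimension: minimum cardinality of a (finite) resolving set. -/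
noncomputable def metricDim {V : Type*} (G : SimpleGraph V) : ℕ :=
  sInf {k | ∃ W : Set V, W.Finite ∧ W.ncard = k ∧ Resolves G W}
/-- `K_{m,m}` minus the Hamiltonian cycle `x₁ y₁ x₂ y₂ … x_m y_m x₁` (0-indexed:
cycle edges are `xᵢ yᵢ` and `yᵢ x_{i+1 mod m}`). -/
def cycGraph (m : ℕ) : SimpleGraph (Fin m ⊕ Fin m) where
  Adj u v := match u, v with
    | Sum.inl i, Sum.inr j => j ≠ i ∧ (i : ℕ) ≠ ((j : ℕ) + 1) % m
    | Sum.inr j, Sum.inl i => j ≠ i ∧ (i : ℕ) ≠ ((j : ℕ) + 1) % m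
    | _, _ => False
  symm := ⟨by rintro (i|i) (j|j) h <;> exact h⟩
  loopless := ⟨by rintro (i|i) h <;> exact h⟩

/-- Position `k` (taken mod `2m`) along the Hamiltonian cycle
`x₁ y₁ x₂ y₂ …`: even positions `2i ↦ xᵢ`, odd positions `2i+1 ↦ yᵢ`. -/
def cyc (m : ℕ) [NeZero m] (k : ℕ) : Fin m ⊕ Fin m :=
  if (k % (2 * m)) % 2 = 0 then
    Sum.inl ⟨k % (2 * m) / 2, by
      have hm : 0 < m := Nat.pos_of_ne_zero (NeZero.ne m)
      have h : k % (2 * m) < 2 * m := Nat.mod_lt _ (by omega)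
      exact Nat.div_lt_of_lt_mul (by omega)⟩
  else
    Sum.inr ⟨k % (2 * m) / 2, by
      have hm : 0 < m := Nat.pos_of_ne_zero (NeZero.ne m)
      have h : k % (2 * m) < 2 * m := Nat.mod_lt _ (by omega)
      exact Nat.div_lt_of_lt_mul (by omega)⟩

/-- `W` has a gap of exactly `L` vertices starting at cycle position `s`:
the positions `s` and `s+L+1` are in `W` and the `L` positions strictly between are not. -/
def IsGap (m : ℕ) [NeZero m] (W : Set (Fin m ⊕ Fin m)) (s L : ℕ) : Prop :=
  cyc m s ∈ W ∧ cyc m (s + L + 1) ∈ W ∧ ∀ t, 1 ≤ t → t ≤ L → cyc m (s + t) ∉ W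

/-!
`H` is connected and bipartite, so the parity of `d(u, w)` tells on which side `u` lies, while
`d(u, w) = 0` and `d(u, w) = 1` detect `u = w` and adjacency. Hence `W` resolves `H` as soon as
two vertices on the same side and outside `W` have different neighbourhoods in `W`. With
0-indexed names, `W` consists of the `y_l` with `l ≡ 0, 1` and the `x_l` with `l ≡ 3, 4 (mod 5)`;
the non-neighbours of `x_i` are `y_{i-1}, y_i` and those of `y_i` are `x_i, x_{i+1}`, and for
`i ≡ 0, 1, 2` resp. `i ≡ 2, 3, 4 (mod 5)` these pairs meet `W` in distinct nonempty sets.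
-/

theorem SimpleGraph.Coloring.even_dist_iff {V : Type*} {G : SimpleGraph V} (c : G.Coloring Bool)
    {u v : V} (h : G.Reachable u v) : Even (G.dist u v) ↔ (c u ↔ c v) := by
  obtain ⟨p, hp⟩ := h.exists_walk_length_eq_dist
  rw [← hp]
  exact c.even_length_iff_congr p

theorem SimpleGraph.Coloring.eq_of_dist_eq {V : Type*} {G : SimpleGraph V} (c : G.Coloring Bool)
    {u v w : V} (hu : G.Reachable u w) (hv : G.Reachable v w) (h : G.dist u w = G.dist v w) :
    c u = c v := by
  have := (c.even_dist_iff hu).symm.trans (h ▸ c.even_dist_iff hv)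
  revert this
  cases c u <;> cases c v <;> cases c w <;> simp

theorem resolves_of_coloring {V : Type*} {G : SimpleGraph V} (hG : G.Preconnected)
    (c : G.Coloring Bool) {W : Set V} (hW : W.Nonempty)
    (h : ∀ u v, c u = c v → u ∉ W → v ∉ W → (∀ w ∈ W, G.Adj u w ↔ G.Adj v w) → u = v) :
    Resolves G W := by
  intro u v hd
  by_cases hu : u ∈ W
  · simpa [(hG v u).dist_eq_zero_iff, eq_comm] using (hd u hu).symm
  by_cases hv : v ∈ W
  · simpa [(hG u v).dist_eq_zero_iff] using hd v hv
  obtain ⟨w₀, hw₀⟩ := hW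
  refine h u v (c.eq_of_dist_eq (hG u w₀) (hG v w₀) (hd w₀ hw₀)) hu hv fun w hw => ?_
  rw [← SimpleGraph.dist_eq_one_iff_adj, ← SimpleGraph.dist_eq_one_iff_adj, hd w hw]

theorem cycGraph_adj_inl_inr {m : ℕ} {i j : Fin m} :
    (cycGraph m).Adj (.inl i) (.inr j) ↔
      ¬((j : ℕ) = i ∨ (i : ℕ) = j + 1 ∨ ((j : ℕ) + 1 = m ∧ (i : ℕ) = 0)) := by
  change j ≠ i ∧ (i : ℕ) ≠ ((j : ℕ) + 1) % m ↔ _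
  rw [Fin.ne_iff_vne]
  rcases Nat.lt_or_ge ((j : ℕ) + 1) m with hj | hj
  · rw [Nat.mod_eq_of_lt hj]; omega
  · rw [show (j : ℕ) + 1 = m by omega, Nat.mod_self]; omega

theorem cycGraph_exists_common_adj {m : ℕ} (hm : 5 ≤ m) (i j : Fin m) :
    ∃ a, (cycGraph m).Adj (.inl i) (.inr a) ∧ (cycGraph m).Adj (.inl j) (.inr a) := by
  by_contra! h
  have h0 := h ⟨0, by omega⟩
  have h1 := h ⟨1, by omega⟩
  have h2 := h ⟨2, by omega⟩
  have h3 := h ⟨3, by omega⟩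
  have h4 := h ⟨4, by omega⟩
  simp only [cycGraph_adj_inl_inr] at h0 h1 h2 h3 h4
  omega

theorem cycGraph_exists_inl_adj {m : ℕ} (hm : 3 ≤ m) (j : Fin m) :
    ∃ a, (cycGraph m).Adj (.inl a) (.inr j) := by
  by_contra! h
  have h0 := h ⟨0, by omega⟩
  have h1 := h ⟨1, by omega⟩
  have h2 := h ⟨2, by omega⟩
  simp only [cycGraph_adj_inl_inr, not_not] at h0 h1 h2
  omega

theorem cycGraph_preconnected {m : ℕ} (hm : 5 ≤ m) : (cycGraph m).Preconnected := by
  have hx (i j : Fin m) : (cycGraph m).Reachable (.inl i) (.inl j) := by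
    obtain ⟨a, hi, hj⟩ := cycGraph_exists_common_adj hm i j
    exact hi.reachable.trans hj.symm.reachable
  have hv : ∀ v, (cycGraph m).Reachable (.inl ⟨0, by omega⟩) v := by
    rintro (i | j)
    · exact hx _ i
    · obtain ⟨a, ha⟩ := cycGraph_exists_inl_adj (by omega) j
      exact (hx _ a).trans ha.reachable
  exact fun u v => (hv u).symm.trans (hv v)

def cycGraph.bicoloring (m : ℕ) : (cycGraph m).Coloring Bool :=
  SimpleGraph.Coloring.mk Sum.isLeft fun {u v} h => by
    rcases u with i | i <;> rcases v with j | j <;> first | exact h.elim | simp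

theorem cyc_eq_inl_iff {m : ℕ} [NeZero m] {p : ℕ} (hp : p < 2 * m) {i : Fin m} :
    cyc m p = .inl i ↔ p = 2 * i := by
  simp only [cyc, Nat.mod_eq_of_lt hp]
  split_ifs <;> simp only [Sum.inl.injEq, false_iff, Fin.ext_iff] <;> omega

theorem cyc_eq_inr_iff {m : ℕ} [NeZero m] {p : ℕ} (hp : p < 2 * m) {i : Fin m} :
    cyc m p = .inr i ↔ p = 2 * i + 1 := by
  simp only [cyc, Nat.mod_eq_of_lt hp]
  split_ifs <;> simp only [Sum.inr.injEq, false_iff, Fin.ext_iff] <;> omega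

theorem cyc_injOn (m : ℕ) [NeZero m] : Set.InjOn (cyc m) (Set.Iio (2 * m)) := by
  intro p hp q hq h
  rcases hc : cyc m p with i | i
  · rw [(cyc_eq_inl_iff hp).1 hc, (cyc_eq_inl_iff hq).1 (h.symm.trans hc)]
  · rw [(cyc_eq_inr_iff hp).1 hc, (cyc_eq_inr_iff hq).1 (h.symm.trans hc)]

-- In the paper's 1-indexed names these cycle positions are `y_{5j+1}, y_{5j+2}, x_{5j+4}, x_{5j+5}`.
def blockSet (m k : ℕ) [NeZero m] : Set (Fin m ⊕ Fin m) :=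
  {v | ∃ j < k, v = cyc m (10 * j + 1) ∨ v = cyc m (10 * j + 3) ∨
    v = cyc m (10 * j + 6) ∨ v = cyc m (10 * j + 8)}

section blockSet

variable {m k : ℕ} [NeZero m]

theorem inl_mem_blockSet_iff (hm : m = 5 * k) {i : Fin m} :
    .inl i ∈ blockSet m k ↔ 3 ≤ (i : ℕ) % 5 := by
  constructor
  · rintro ⟨j, hj, h | h | h | h⟩ <;> rw [eq_comm, cyc_eq_inl_iff (by omega)] at h <;> omega
  · intro h
    refine ⟨i / 5, by omega, .inr (.inr ?_)⟩
    rcases (by omega : (i : ℕ) % 5 = 3 ∨ (i : ℕ) % 5 = 4) with h | h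
    · exact .inl ((cyc_eq_inl_iff (by omega)).2 (by omega)).symm
    · exact .inr ((cyc_eq_inl_iff (by omega)).2 (by omega)).symm

theorem inr_mem_blockSet_iff (hm : m = 5 * k) {i : Fin m} :
    .inr i ∈ blockSet m k ↔ (i : ℕ) % 5 < 2 := by
  constructor
  · rintro ⟨j, hj, h | h | h | h⟩ <;> rw [eq_comm, cyc_eq_inr_iff (by omega)] at h <;> omega
  · intro h
    refine ⟨i / 5, by omega, ?_⟩
    rcases (by omega : (i : ℕ) % 5 = 0 ∨ (i : ℕ) % 5 = 1) with h | h
    · exact .inl ((cyc_eq_inr_iff (by omega)).2 (by omega)).symm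
    · exact .inr (.inl ((cyc_eq_inr_iff (by omega)).2 (by omega)).symm)

theorem ncard_blockSet (hm : m = 5 * k) : (blockSet m k).ncard = 4 * k := by
  have hW : blockSet m k =
      ((Finset.range k ×ˢ {1, 3, 6, 8}).image fun q => cyc m (10 * q.1 + q.2) : Finset _) := by
    ext v
    simp only [blockSet, Set.mem_ofPred_eq, Finset.coe_image, Finset.coe_product, Set.mem_image,
      Set.mem_prod, Finset.coe_range, Set.mem_Iio, Finset.coe_insert, Finset.coe_singleton,
      Set.mem_insert_iff, Set.mem_singleton_iff, Prod.exists]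
    constructor
    · rintro ⟨j, hj, h | h | h | h⟩ <;> exact ⟨j, _, ⟨hj, by norm_num⟩, h.symm⟩
    · rintro ⟨j, b, ⟨hj, rfl | rfl | rfl | rfl⟩, rfl⟩ <;> exact ⟨j, hj, by simp⟩
  have hinj : Set.InjOn (fun q : ℕ × ℕ => cyc m (10 * q.1 + q.2))
      ↑(Finset.range k ×ˢ {1, 3, 6, 8}) := by
    rintro ⟨a, r⟩ hq ⟨b, s⟩ hq' h
    simp only [Finset.coe_product, Finset.coe_range, Finset.coe_insert, Finset.coe_singleton,
      Set.mem_prod, Set.mem_Iio, Set.mem_insert_iff, Set.mem_singleton_iff] at hq hq'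
    have := cyc_injOn m (Set.mem_Iio.2 (by omega)) (Set.mem_Iio.2 (by omega)) h
    simp only [Prod.mk.injEq]
    omega
  rw [hW, Set.ncard_coe_finset, Finset.card_image_of_injOn hinj, Finset.card_product,
    Finset.card_range, mul_comm]
  rfl

theorem inl_eq_of_forall_adj_iff (hm : m = 5 * k) {i j : Fin m}
    (hi : .inl i ∉ blockSet m k) (hj : .inl j ∉ blockSet m k)
    (h : ∀ w ∈ blockSet m k, (cycGraph m).Adj (.inl i) w ↔ (cycGraph m).Adj (.inl j) w) :
    i = j := by
  rw [inl_mem_blockSet_iff hm] at hi hj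
  have key (l : ℕ) (hl : l < m) (h5 : l % 5 < 2) :
      (l = i ∨ (i : ℕ) = l + 1 ∨ (l + 1 = m ∧ (i : ℕ) = 0)) ↔
        (l = j ∨ (j : ℕ) = l + 1 ∨ (l + 1 = m ∧ (j : ℕ) = 0)) := by
    simpa only [cycGraph_adj_inl_inr, not_iff_not] using
      h (.inr ⟨l, hl⟩) ((inr_mem_blockSet_iff hm).2 h5)
  have := key i; have := key (i - 1); have := key j; have := key (j - 1)
  ext
  omega

theorem inr_eq_of_forall_adj_iff (hm : m = 5 * k) {i j : Fin m}
    (hi : .inr i ∉ blockSet m k) (hj : .inr j ∉ blockSet m k)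
    (h : ∀ w ∈ blockSet m k, (cycGraph m).Adj (.inr i) w ↔ (cycGraph m).Adj (.inr j) w) :
    i = j := by
  rw [inr_mem_blockSet_iff hm] at hi hj
  have key (l : ℕ) (hl : l < m) (h5 : 3 ≤ l % 5) :
      ((i : ℕ) = l ∨ l = i + 1 ∨ ((i : ℕ) + 1 = m ∧ l = 0)) ↔
        ((j : ℕ) = l ∨ l = j + 1 ∨ ((j : ℕ) + 1 = m ∧ l = 0)) := by
    simpa only [SimpleGraph.adj_comm (cycGraph m) (.inr _), cycGraph_adj_inl_inr, not_iff_not]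
      using h (.inl ⟨l, hl⟩) ((inl_mem_blockSet_iff hm).2 h5)
  have := key i; have := key (i + 1); have := key j; have := key (j + 1)
  ext
  omega

end blockSet

theorem stmt6_general (m k : ℕ) [NeZero m] (hm : m = 5 * k) :
    Resolves (cycGraph m)
      {v | ∃ j < k, v = cyc m (10 * j + 1) ∨ v = cyc m (10 * j + 3) ∨
        v = cyc m (10 * j + 6) ∨ v = cyc m (10 * j + 8)} ∧
    ({v | ∃ j < k, v = cyc m (10 * j + 1) ∨ v = cyc m (10 * j + 3) ∨
        v = cyc m (10 * j + 6) ∨ v = cyc m (10 * j + 8)} :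
      Set (Fin m ⊕ Fin m)).ncard = 4 * k := by
  have h5 : 5 ≤ m := by have := NeZero.ne m; omega
  have hW : (blockSet m k).Nonempty := ⟨.inr ⟨0, by omega⟩, (inr_mem_blockSet_iff hm).2 (by simp)⟩
  refine ⟨resolves_of_coloring (cycGraph_preconnected h5) (cycGraph.bicoloring m) hW ?_,
    ncard_blockSet hm⟩
  rintro (i | i) (j | j) hc hu hv h
  · rw [inl_eq_of_forall_adj_iff hm hu hv h]
  · cases hc
  · cases hc
  · rw [inr_eq_of_forall_adj_iff hm hu hv h]

/-- for `m = 5k`, `k ≥ 1`, the set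
`W = {y_{5j+1}, y_{5j+2}, x_{5j+4}, x_{5j+5} : 0 ≤ j ≤ k-1}` (written via cycle
positions: `y_{5j+1}` is position `10j+1`, `y_{5j+2}` is `10j+3`,
`x_{5j+4}` is `10j+6`, `x_{5j+5}` is `10j+8`) is a resolving set of
`K_{m,m} \ E(C_{2m})` of cardinality `4k`. -/
theorem stmt6 (m k : ℕ) [NeZero m] (hk : 1 ≤ k) (hm : m = 5 * k) :
    Resolves (cycGraph m)
      {v | ∃ j < k, v = cyc m (10 * j + 1) ∨ v = cyc m (10 * j + 3) ∨
        v = cyc m (10 * j + 6) ∨ v = cyc m (10 * j + 8)} ∧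
    ({v | ∃ j < k, v = cyc m (10 * j + 1) ∨ v = cyc m (10 * j + 3) ∨
        v = cyc m (10 * j + 6) ∨ v = cyc m (10 * j + 8)} :
      Set (Fin m ⊕ Fin m)).ncard = 4 * k :=
  stmt6_general m k hm
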